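/- Let d ≥ 1 and let k̂ : ℝ^d → ℝ be measurable with 0 ≤ k̂(λ) ≤ 1 for all λ. For complex-valued Schwartz functions u define K₁u := F⁻¹(k̂^{1/2} · û) and K₂u := F⁻¹((1 − k̂)^{1/2} · û), and let J denote pointwise complex conjugation. Then for every real-valued Schwartz function f and all complex-valued Schwartz functions g, h on ℝ^d: ∫_{ℝ^d} conj( f(x) · (K₁(Jh))(x) ) · (K₂ g)(x) dx = (2π)^{−d/2} ∫_{ℝ^d} ∫_{ℝ^d} conj( f̂(λ + ξ) ) · (1 − k̂(λ))^{1/2} · k̂(−ξ)^{1/2} · ĝ(λ) · ĥ(ξ) dλ dξ. -/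

import Mathlib

open MeasureTheory

/-- The Fourier transform `û(ξ) = (2π)^{-d/2} ∫ e^{-i x·ξ} u(x) dx`. -/
noncomputable def fourierT (d : ℕ) (u : EuclideanSpace ℝ (Fin d) → ℂ)
    (ξ : EuclideanSpace ℝ (Fin d)) : ℂ :=
  ((2 * Real.pi : ℝ) ^ (-(d : ℝ) / 2) : ℝ) *
    ∫ x : EuclideanSpace ℝ (Fin d),
      Complex.exp (-(Complex.I * ((inner ℝ x ξ : ℝ) : ℂ))) * u x

/-- The inverse Fourier transform `ǔ(x) = (2π)^{-d/2} ∫ e^{i λ·x} u(λ) dλ`. -/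
noncomputable def invFourierT (d : ℕ) (u : EuclideanSpace ℝ (Fin d) → ℂ)
    (x : EuclideanSpace ℝ (Fin d)) : ℂ :=
  ((2 * Real.pi : ℝ) ^ (-(d : ℝ) / 2) : ℝ) *
    ∫ lam : EuclideanSpace ℝ (Fin d),
      Complex.exp (Complex.I * ((inner ℝ lam x : ℝ) : ℂ)) * u lam

/-- `K₁ u = F⁻¹(k̂^{1/2} · û)`. -/
noncomputable def Kone (d : ℕ) (khat : EuclideanSpace ℝ (Fin d) → ℝ)
    (u : EuclideanSpace ℝ (Fin d) → ℂ) : EuclideanSpace ℝ (Fin d) → ℂ :=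
  invFourierT d (fun lam => (Real.sqrt (khat lam) : ℂ) * fourierT d u lam)

/-- `K₂ u = F⁻¹((1 - k̂)^{1/2} · û)`. -/
noncomputable def Ktwo (d : ℕ) (khat : EuclideanSpace ℝ (Fin d) → ℝ)
    (u : EuclideanSpace ℝ (Fin d) → ℂ) : EuclideanSpace ℝ (Fin d) → ℂ :=
  invFourierT d (fun lam => (Real.sqrt (1 - khat lam) : ℂ) * fourierT d u lam)

/-! Write `K₁(Jh)` (after conjugation, via the substitution `ξ ↦ -ξ`) and `K₂ g` as inverse
Fourier integrals of the `L¹` functions `k̂(-ξ)^{1/2} ĥ(ξ)` and `(1 - k̂(λ))^{1/2} ĝ(λ)`. The left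
side is then a triple integral over `(x, λ, ξ)` of `f(x) e^{i(λ+ξ)·x}` times a function of
`(λ, ξ)`; it converges absolutely since `f`, `ĝ`, `ĥ` are integrable and the multipliers are
bounded by `1`. By Fubini the `x`-integral can be done first, and since `f` is real it produces
`(2π)^{d/2} conj f̂(λ + ξ)`. -/

open Complex ComplexConjugate FourierTransform RealInnerProductSpace

noncomputable abbrev fourierConst (d : ℕ) : ℝ := (2 * Real.pi : ℝ) ^ (-(d : ℝ) / 2)

section Fubini

variable {V : Type*} [NormedAddCommGroup V] [InnerProductSpace ℝ V] [MeasurableSpace V]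
  [BorelSpace V] [SecondCountableTopology V] {μ : Measure V} [SFinite μ]

theorem integral_mul_integral_exp_mul_integral_exp {f A B : V → ℂ} (hf : Integrable f μ)
    (hA : Integrable A μ) (hB : Integrable B μ) :
    ∫ x, f x * (∫ ξ, exp (I * ⟪ξ, x⟫) * A ξ ∂μ) * (∫ l, exp (I * ⟪l, x⟫) * B l ∂μ) ∂μ
      = ∫ l, ∫ ξ, B l * A ξ * ∫ x, f x * exp (I * ⟪l + ξ, x⟫) ∂μ ∂μ ∂μ := by
  set F : V → V × V → ℂ := fun x p =>
    f x * (exp (I * ⟪p.1, x⟫) * B p.1 * (exp (I * ⟪p.2, x⟫) * A p.2)) with hF_def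
  have hF : Integrable (Function.uncurry F) (μ.prod (μ.prod μ)) := by
    have hphase : Continuous fun q : V × V × V =>
        exp (I * ⟪q.2.1, q.1⟫) * exp (I * ⟪q.2.2, q.1⟫) := by fun_prop
    refine ((hf.mul_prod (hB.mul_prod hA)).bdd_mul hphase.aestronglyMeasurable
      (c := 1) (.of_forall fun q => ?_)).congr (.of_forall fun q => ?_)
    · simp only [norm_mul, norm_exp_I_mul_ofReal, mul_one, le_refl]
    · simp only [hF_def, Function.uncurry]
      ring
  calc ∫ x, f x * (∫ ξ, exp (I * ⟪ξ, x⟫) * A ξ ∂μ) * (∫ l, exp (I * ⟪l, x⟫) * B l ∂μ) ∂μ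
      = ∫ x, ∫ p, F x p ∂(μ.prod μ) ∂μ := by
        congr 2 with x
        have hsplit := integral_prod_mul (μ := μ) (ν := μ)
          (fun l => exp (I * ⟪l, x⟫) * B l) (fun ξ => exp (I * ⟪ξ, x⟫) * A ξ)
        simp only [hF_def]
        rw [integral_const_mul, hsplit]
        ring
    _ = ∫ p, ∫ x, F x p ∂μ ∂(μ.prod μ) := integral_integral_swap hF
    _ = ∫ l, ∫ ξ, ∫ x, F x (l, ξ) ∂μ ∂μ ∂μ := integral_prod _ hF.integral_prod_right
    _ = ∫ l, ∫ ξ, B l * A ξ * ∫ x, f x * exp (I * ⟪l + ξ, x⟫) ∂μ ∂μ ∂μ := by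
        congr 2 with l
        congr 2 with ξ
        rw [← integral_const_mul]
        congr 2 with x
        rw [inner_add_left, ofReal_add, mul_add, exp_add]
        ring

end Fubini

theorem integrable_sqrt_mul_of_le_one {α : Type*} [MeasurableSpace α] {μ : Measure α}
    {a : α → ℝ} {u : α → ℂ} (ha : Measurable a) (ha1 : ∀ x, a x ≤ 1) (hu : Integrable u μ) :
    Integrable (fun x => (Real.sqrt (a x) : ℂ) * u x) μ :=
  hu.bdd_mul (c := 1) (by fun_prop) (.of_forall fun x => by
    simpa [abs_of_nonneg (Real.sqrt_nonneg _)] using ha1 x)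

section FourierT

variable {d : ℕ}

theorem fourierT_eq_fourier (u : EuclideanSpace ℝ (Fin d) → ℂ) (ξ : EuclideanSpace ℝ (Fin d)) :
    fourierT d u ξ = fourierConst d * 𝓕 u ((2 * Real.pi)⁻¹ • ξ) := by
  rw [Real.fourier_eq', fourierT]
  congr 1
  refine integral_congr_ae (.of_forall fun x => ?_)
  dsimp only
  have h2π : -2 * Real.pi * (2 * Real.pi)⁻¹ = -1 := by field_simp
  rw [smul_eq_mul, real_inner_smul_right, ← mul_assoc, h2π]
  push_cast
  ring_nf

theorem integrable_fourierT (u : SchwartzMap (EuclideanSpace ℝ (Fin d)) ℂ) :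
    Integrable (fourierT d u) := by
  have h𝓕 : Integrable (𝓕 ⇑u) := SchwartzMap.fourier_coe u ▸ (𝓕 u).integrable
  have h2π : (2 * Real.pi)⁻¹ ≠ 0 := by positivity
  refine ((h𝓕.comp_smul h2π).const_mul (fourierConst d : ℂ)).congr (.of_forall fun ξ => ?_)
  exact (fourierT_eq_fourier _ ξ).symm

theorem fourierT_conj (u : EuclideanSpace ℝ (Fin d) → ℂ) (ξ : EuclideanSpace ℝ (Fin d)) :
    fourierT d (fun y => conj (u y)) ξ = conj (fourierT d u (-ξ)) := by
  rw [fourierT, fourierT, map_mul, conj_ofReal, ← integral_conj]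
  congr 2 with x
  rw [map_mul, ← exp_conj]
  simp [inner_neg_right]

theorem conj_fourierT_ofReal (f : EuclideanSpace ℝ (Fin d) → ℝ) (ξ : EuclideanSpace ℝ (Fin d)) :
    conj (fourierT d (fun y => (f y : ℂ)) ξ)
      = fourierConst d * ∫ x, (f x : ℂ) * exp (I * ⟪ξ, x⟫) := by
  rw [fourierT, map_mul, conj_ofReal, ← integral_conj]
  congr 2 with x
  rw [map_mul, conj_ofReal, ← exp_conj, mul_comm, real_inner_comm]
  simp

theorem conj_Kone_conj (khat : EuclideanSpace ℝ (Fin d) → ℝ)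
    (u : EuclideanSpace ℝ (Fin d) → ℂ) (x : EuclideanSpace ℝ (Fin d)) :
    conj (Kone d khat (fun y => conj (u y)) x)
      = fourierConst d * ∫ ξ, exp (I * ⟪ξ, x⟫) * (Real.sqrt (khat (-ξ)) * fourierT d u ξ) := by
  rw [Kone, invFourierT, map_mul, conj_ofReal, ← integral_conj, ← integral_neg_eq_self]
  congr 2 with ξ
  rw [map_mul, map_mul, conj_ofReal, fourierT_conj, conj_conj, neg_neg, ← exp_conj]
  simp [inner_neg_left]

end FourierT

theorem stmt1_general (d : ℕ)
    (khat : EuclideanSpace ℝ (Fin d) → ℝ) (hkm : Measurable khat)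
    (hk01 : ∀ lam, 0 ≤ khat lam ∧ khat lam ≤ 1)
    (f : SchwartzMap (EuclideanSpace ℝ (Fin d)) ℝ)
    (g h : SchwartzMap (EuclideanSpace ℝ (Fin d)) ℂ) :
    ∫ x : EuclideanSpace ℝ (Fin d),
        (starRingEnd ℂ) (((f x : ℝ) : ℂ) *
            Kone d khat (fun y => (starRingEnd ℂ) (h y)) x) * Ktwo d khat (fun y => g y) x
      = ((2 * Real.pi : ℝ) ^ (-(d : ℝ) / 2) : ℝ) *
          ∫ lam : EuclideanSpace ℝ (Fin d), ∫ ξ : EuclideanSpace ℝ (Fin d),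
            (starRingEnd ℂ) (fourierT d (fun y => ((f y : ℝ) : ℂ)) (lam + ξ)) *
              (Real.sqrt (1 - khat lam) : ℂ) * (Real.sqrt (khat (-ξ)) : ℂ) *
              fourierT d (fun y => g y) lam * fourierT d (fun y => h y) ξ := by
  have hA := integrable_sqrt_mul_of_le_one (a := fun ξ => khat (-ξ)) (hkm.comp measurable_neg)
    (fun ξ => (hk01 (-ξ)).2) (integrable_fourierT h)
  have hB := integrable_sqrt_mul_of_le_one (a := fun l => 1 - khat l) (measurable_const.sub hkm)
    (fun l => sub_le_self 1 (hk01 l).1) (integrable_fourierT g)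
  have hf : Integrable fun x => (f x : ℂ) := f.integrable.ofReal
  calc _ = ∫ x, (fourierConst d : ℂ) ^ 2 * ((f x : ℂ) *
            (∫ ξ, exp (I * ⟪ξ, x⟫) * (Real.sqrt (khat (-ξ)) * fourierT d h ξ)) *
            (∫ l, exp (I * ⟪l, x⟫) * (Real.sqrt (1 - khat l) * fourierT d g l))) := by
        congr 2 with x
        rw [map_mul, conj_ofReal, conj_Kone_conj, Ktwo, invFourierT]
        ring
    _ = _ := by
        rw [integral_const_mul, integral_mul_integral_exp_mul_integral_exp hf hA hB, sq, mul_assoc,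
          ← integral_const_mul]
        congr 2 with l
        rw [← integral_const_mul]
        congr 2 with ξ
        rw [conj_fourierT_ofReal]
        ring

/-- the Parseval-type identity (weqew3) from the proof of Lemma 3.1:
`∫ conj(f(x) (K₁ Jh)(x)) (K₂ g)(x) dx
   = (2π)^{-d/2} ∫∫ conj(f̂(λ+ξ)) (1-k̂(λ))^{1/2} k̂(-ξ)^{1/2} ĝ(λ) ĥ(ξ) dλ dξ`. -/
theorem stmt1 (d : ℕ) (hd : 1 ≤ d)
    (khat : EuclideanSpace ℝ (Fin d) → ℝ) (hkm : Measurable khat)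
    (hk01 : ∀ lam, 0 ≤ khat lam ∧ khat lam ≤ 1)
    (f : SchwartzMap (EuclideanSpace ℝ (Fin d)) ℝ)
    (g h : SchwartzMap (EuclideanSpace ℝ (Fin d)) ℂ) :
    ∫ x : EuclideanSpace ℝ (Fin d),
        (starRingEnd ℂ) (((f x : ℝ) : ℂ) *
            Kone d khat (fun y => (starRingEnd ℂ) (h y)) x) * Ktwo d khat (fun y => g y) x
      = ((2 * Real.pi : ℝ) ^ (-(d : ℝ) / 2) : ℝ) *
          ∫ lam : EuclideanSpace ℝ (Fin d), ∫ ξ : EuclideanSpace ℝ (Fin d),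
            (starRingEnd ℂ) (fourierT d (fun y => ((f y : ℝ) : ℂ)) (lam + ξ)) *
              (Real.sqrt (1 - khat lam) : ℂ) * (Real.sqrt (khat (-ξ)) : ℂ) *
              fourierT d (fun y => g y) lam * fourierT d (fun y => h y) ξ :=
  stmt1_general d khat hkm hk01 f g h
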